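/- arXiv:2411.18508 — 3 statements merged into one kernel-verified Lean document; each statement's English description precedes it below -/
import Mathlib

section
/- Let c > 1 and θ = artanh(1/c) (equivalently c = coth θ, θ > 0). The function h(t) = cosh⁴(t)/(c²·sinh²(t)) − cosh²(t) is strictly decreasing on the interval (0, θ]. -/
/-- The inverse hyperbolic tangent (not currently in Mathlib). -/
noncomputable def artanh (x : ℝ) : ℝ := (1 / 2) * Real.log ((1 + x) / (1 - x))

theorem h_strict_anti (c θ : ℝ) (hc : 1 < c) (hθ : θ = artanh (1 / c)) :
    StrictAntiOn
      (fun t => Real.cosh t ^ 4 / (c ^ 2 * Real.sinh t ^ 2) - Real.cosh t ^ 2)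
      (Set.Ioc 0 θ) := by
  intro x hx y hy hxy
  obtain ⟨hx0, -⟩ := hx
  obtain ⟨hy0, -⟩ := hy
  simp only
  have ha1 : 1 < Real.cosh x ^ 2 := by
    have := Real.one_lt_cosh.2 (ne_of_gt hx0)
    nlinarith
  have hb1 : 1 < Real.cosh y ^ 2 := by
    have := Real.one_lt_cosh.2 (ne_of_gt hy0)
    nlinarith
  have hab : Real.cosh x ^ 2 < Real.cosh y ^ 2 := by
    have h1 : Real.cosh x < Real.cosh y := by
      rw [Real.cosh_lt_cosh, abs_of_pos hx0, abs_of_pos hy0]; exact hxy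
    nlinarith [Real.cosh_pos x]
  have hc2 : 1 < c ^ 2 := by nlinarith
  rw [Real.sinh_sq, Real.sinh_sq]
  set a := Real.cosh x ^ 2 with ha
  set b := Real.cosh y ^ 2 with hb
  have h4a : Real.cosh x ^ 4 = a ^ 2 := by rw [ha]; ring
  have h4b : Real.cosh y ^ 4 = b ^ 2 := by rw [hb]; ring
  rw [h4a, h4b]
  have hA : 0 < c ^ 2 * (a - 1) := by nlinarith
  have hB : 0 < c ^ 2 * (b - 1) := by nlinarith
  rw [div_sub' (ne_of_gt hB), div_sub' (ne_of_gt hA),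
    div_lt_div_iff₀ hB hA]
  nlinarith [mul_pos (sub_pos.2 hab)
    (mul_pos (mul_pos (sub_pos.2 hc2) (sub_pos.2 ha1)) (sub_pos.2 hb1))]
end

section
/- Let c > 1 and θ = artanh(1/c). Define V : (0, θ) → ℝ by V(φ) = artanh((1/c)·√(1 − (c² − 1)·sinh²(φ))). Then V is differentiable at every φ ∈ (0, θ) and its derivative satisfies V'(φ)² · (cosh⁴(φ)/(c²·sinh²(φ)) − cosh²(φ)) = 1. -/
lemma hasDerivAt_artanh {y : ℝ} (h1 : -1 < y) (h2 : y < 1) :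
    HasDerivAt artanh (1 / (1 - y ^ 2)) y := by
  have hpos1 : 0 < 1 + y := by linarith
  have hpos2 : 0 < 1 - y := by linarith
  have hg : HasDerivAt (fun x : ℝ => (1/2) * (Real.log (1+x) - Real.log (1-x)))
      (1 / (1 - y ^ 2)) y := by
    have hl1 : HasDerivAt (fun x : ℝ => Real.log (1+x)) (1/(1+y)) y := by
      have := (Real.hasDerivAt_log (ne_of_gt hpos1)).comp y ((hasDerivAt_id y).const_add 1)
      simpa [one_div, Function.comp_def] using this
    have hl2 : HasDerivAt (fun x : ℝ => Real.log (1-x)) (-(1/(1-y))) y := by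
      have := (Real.hasDerivAt_log (ne_of_gt hpos2)).comp y ((hasDerivAt_id y).const_sub 1)
      simpa [one_div, Function.comp_def] using this
    have hne : (1:ℝ) - y^2 ≠ 0 := by nlinarith
    have := (hl1.fun_sub hl2).const_mul (1/2 : ℝ)
    refine this.congr_deriv ?_
    field_simp [hne]
    ring
  apply hg.congr_of_eventuallyEq
  filter_upwards [Ioo_mem_nhds h1 h2] with x hx
  unfold artanh
  rw [Real.log_div (by linarith [hx.1] : (1:ℝ) + x ≠ 0) (by linarith [hx.2] : (1:ℝ) - x ≠ 0)]

theorem eikonal_hyperbolic (c θ : ℝ) (hc : 1 < c) (hθ : θ = artanh (1 / c)) :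
    ∀ φ ∈ Set.Ioo 0 θ,
      DifferentiableAt ℝ
        (fun x : ℝ => artanh ((1 / c) * Real.sqrt (1 - (c ^ 2 - 1) * Real.sinh x ^ 2))) φ ∧
      (deriv (fun x : ℝ =>
          artanh ((1 / c) * Real.sqrt (1 - (c ^ 2 - 1) * Real.sinh x ^ 2))) φ) ^ 2 *
        (Real.cosh φ ^ 4 / (c ^ 2 * Real.sinh φ ^ 2) - Real.cosh φ ^ 2) = 1 := by
  intro φ hφ
  obtain ⟨hφ0, hφθ⟩ := hφ
  have hc0 : (0:ℝ) < c := lt_trans one_pos hc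
  have hcm1 : (0:ℝ) < c^2 - 1 := by nlinarith
  -- compute sinh θ ^ 2
  have hr : (0:ℝ) < (1 + 1/c)/(1 - 1/c) := by
    apply div_pos
    · positivity
    · have : 1/c < 1 := by rw [div_lt_one hc0]; exact hc
      linarith
  have hc1 : (0:ℝ) < 1 - 1/c := by
    have : 1/c < 1 := by rw [div_lt_one hc0]; exact hc
    linarith
  have hE2 : Real.exp θ ^ 2 = (1 + 1/c)/(1 - 1/c) := by
    rw [hθ]
    unfold artanh
    rw [sq, ← Real.exp_add,
      show (1/2) * Real.log ((1 + 1/c)/(1 - 1/c)) + (1/2) * Real.log ((1 + 1/c)/(1 - 1/c))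
        = Real.log ((1 + 1/c)/(1 - 1/c)) by ring,
      Real.exp_log hr]
  have hE0 : (0:ℝ) < Real.exp θ := Real.exp_pos θ
  have hE2c : Real.exp θ ^ 2 * (c - 1) = c + 1 := by
    have hcne : c - 1 ≠ 0 := by linarith
    rw [hE2]
    field_simp
  have hsθ : Real.sinh θ ^ 2 = 1 / (c^2 - 1) := by
    rw [Real.sinh_eq, Real.exp_neg]
    field_simp
    linear_combination ((c + 1) * Real.exp θ ^ 2 - (c - 1)) * hE2c
  set s := Real.sinh φ with hs
  set ch := Real.cosh φ with hch
  have hs0 : 0 < s := Real.sinh_pos_iff.mpr hφ0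
  have hslt : s < Real.sinh θ := Real.sinh_lt_sinh.mpr hφθ
  have hs2 : s^2 < 1/(c^2-1) := by
    rw [← hsθ]
    exact pow_lt_pow_left₀ hslt hs0.le two_ne_zero
  set A := 1 - (c^2 - 1) * s^2 with hA
  have hA0 : 0 < A := by
    have : (c^2-1) * s^2 < (c^2-1) * (1/(c^2-1)) := by
      exact mul_lt_mul_of_pos_left hs2 hcm1
    rw [mul_one_div_cancel (ne_of_gt hcm1)] at this
    linarith
  have hA1 : A < 1 := by
    have := mul_pos hcm1 (pow_pos hs0 2)
    rw [hA]; linarith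
  have hsqA : Real.sqrt A ^ 2 = A := Real.sq_sqrt hA0.le
  have hsqA0 : 0 < Real.sqrt A := Real.sqrt_pos.mpr hA0
  have hsqA1 : Real.sqrt A < 1 := by
    rw [show (1:ℝ) = Real.sqrt 1 from (Real.sqrt_one).symm]
    exact Real.sqrt_lt_sqrt hA0.le hA1
  set u := (1/c) * Real.sqrt A with hu
  have hu0 : 0 < u := by positivity
  have hu1 : u < 1 := by
    have h1c : 1/c < 1 := by rw [div_lt_one hc0]; exact hc
    calc u = (1/c) * Real.sqrt A := rfl
    _ < 1 * 1 := by
        apply mul_lt_mul' h1c.le hsqA1 hsqA0.le one_pos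
    _ = 1 := by ring
  have hch0 : 0 < ch := Real.cosh_pos φ
  have hch2 : ch^2 = 1 + s^2 := by
    rw [hch, hs, Real.cosh_sq']
  -- inner derivative
  have hinner : HasDerivAt (fun x : ℝ => 1 - (c^2-1) * Real.sinh x ^ 2)
      (-((c^2-1) * (2 * s * ch))) φ := by
    have h1 : HasDerivAt (fun x : ℝ => Real.sinh x ^ 2) (2 * s * ch) φ := by
      have := (Real.hasDerivAt_sinh φ).fun_pow 2
      simpa [hs, hch] using this
    have := (h1.const_mul (c^2-1)).const_sub 1
    convert this using 1
  have hAne : A ≠ 0 := ne_of_gt hA0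
  have hsqrt : HasDerivAt (fun x : ℝ => Real.sqrt (1 - (c^2-1) * Real.sinh x ^ 2))
      (1/(2*Real.sqrt A) * (-((c^2-1) * (2 * s * ch)))) φ := by
    have := (Real.hasDerivAt_sqrt hAne).comp φ hinner
    simpa [hA, Function.comp_def] using this
  have hmul : HasDerivAt (fun x : ℝ => (1/c) * Real.sqrt (1 - (c^2-1) * Real.sinh x ^ 2))
      ((1/c) * (1/(2*Real.sqrt A) * (-((c^2-1) * (2 * s * ch))))) φ :=
    hsqrt.const_mul (1/c)
  have huval : (1/c) * Real.sqrt (1 - (c^2-1) * Real.sinh φ ^ 2) = u := by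
    rw [hu, hA, hs]
  have hV : HasDerivAt (fun x : ℝ => artanh ((1/c) * Real.sqrt (1 - (c^2-1) * Real.sinh x ^ 2)))
      (1/(1 - u^2) * ((1/c) * (1/(2*Real.sqrt A) * (-((c^2-1) * (2 * s * ch)))))) φ := by
    have houter := hasDerivAt_artanh (lt_trans (by norm_num) hu0 : (-1:ℝ) < u) hu1
    have := houter.comp φ hmul
    simpa [huval, Function.comp_def] using this
  constructor
  · exact hV.differentiableAt
  · rw [hV.deriv]
    have h1u2 : 1 - u^2 = (c^2 - A)/c^2 := by
      rw [hu]
      field_simp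
      rw [hsqA]
    have hc2A : c^2 - A = (c^2-1) * ch^2 := by
      rw [hA, hch2]; ring
    have key : 1/(1 - u^2) * ((1/c) * (1/(2*Real.sqrt A) * (-((c^2-1) * (2 * s * ch)))))
        = -(c * s) / (Real.sqrt A * ch) := by
      rw [h1u2, hc2A]
      field_simp
    rw [key]
    have hchsq : ch^2 - c^2 * s^2 = A := by rw [hA, hch2]; ring
    rw [div_pow, mul_pow, hsqA, show (-(c*s))^2 = c^2 * s^2 by ring]
    field_simp
    linear_combination hchsq
end

section
/- Let c > 0 and r = arctan(1/c). Define V : (0, r) → ℝ by V(φ) = arctan((1/c)·√(1 − (c² + 1)·sin²(φ))). Then V is differentiable at every φ ∈ (0, r) and its derivative satisfies V'(φ)² · (cos⁴(φ)/(c²·sin²(φ)) − cos²(φ)) = 1. -/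
theorem eikonal_spherical (c r : ℝ) (hc : 0 < c) (hr : r = Real.arctan (1 / c)) :
    ∀ φ ∈ Set.Ioo 0 r,
      DifferentiableAt ℝ
        (fun x : ℝ => Real.arctan ((1 / c) * Real.sqrt (1 - (c ^ 2 + 1) * Real.sin x ^ 2))) φ ∧
      (deriv (fun x : ℝ =>
          Real.arctan ((1 / c) * Real.sqrt (1 - (c ^ 2 + 1) * Real.sin x ^ 2))) φ) ^ 2 *
        (Real.cos φ ^ 4 / (c ^ 2 * Real.sin φ ^ 2) - Real.cos φ ^ 2) = 1 := by
  intro φ hφ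
  obtain ⟨hφ0, hφr⟩ := hφ
  have hr2 : r < Real.pi / 2 := hr ▸ Real.arctan_lt_pi_div_two _
  have hφπ : φ < Real.pi / 2 := hφr.trans hr2
  have hcos : 0 < Real.cos φ := Real.cos_pos_of_mem_Ioo ⟨by linarith [Real.pi_pos], hφπ⟩
  have hsin : 0 < Real.sin φ := Real.sin_pos_of_pos_of_lt_pi hφ0 (by linarith [Real.pi_pos])
  have htan : Real.tan φ < 1 / c := by
    have h := Real.tan_lt_tan_of_lt_of_lt_pi_div_two (x := φ) (y := r)
      (by linarith [Real.pi_pos]) hr2 hφr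
    rwa [hr, Real.tan_arctan] at h
  have hcs : c * Real.sin φ < Real.cos φ := by
    rw [Real.tan_eq_sin_div_cos, div_lt_div_iff₀ hcos hc] at htan
    linarith
  have hpyth := Real.sin_sq_add_cos_sq φ
  have hu : 0 < 1 - (c ^ 2 + 1) * Real.sin φ ^ 2 := by
    nlinarith [mul_pos hc hsin, mul_pos (mul_pos hc hsin) hcos]
  set u : ℝ := 1 - (c ^ 2 + 1) * Real.sin φ ^ 2 with hu_def
  have h1 : HasDerivAt (fun x : ℝ => 1 - (c ^ 2 + 1) * Real.sin x ^ 2)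
      (-((c ^ 2 + 1) * (2 * Real.sin φ * Real.cos φ))) φ := by
    have h := (((Real.hasDerivAt_sin φ).pow 2).const_mul (c ^ 2 + 1)).const_sub 1
    exact h.congr_deriv (by norm_num)
  have h2 : HasDerivAt Real.sqrt (1 / (2 * Real.sqrt u)) u := Real.hasDerivAt_sqrt hu.ne'
  have h3 := h2.comp φ h1
  have h4 := h3.const_mul (1 / c)
  have h5 := (Real.hasDerivAt_arctan ((1 / c) * Real.sqrt u)).comp φ h4
  have h6 : HasDerivAt
      (fun x : ℝ => Real.arctan ((1 / c) * Real.sqrt (1 - (c ^ 2 + 1) * Real.sin x ^ 2)))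
      (1 / (1 + ((1 / c) * Real.sqrt u) ^ 2) *
        ((1 / c) * (1 / (2 * Real.sqrt u) * -((c ^ 2 + 1) * (2 * Real.sin φ * Real.cos φ))))) φ :=
    h5
  refine ⟨h6.differentiableAt, ?_⟩
  rw [h6.deriv]
  have hsq : Real.sqrt u ^ 2 = u := Real.sq_sqrt hu.le
  have hsqrt : 0 < Real.sqrt u := Real.sqrt_pos.2 hu
  have hden : 1 + ((1 / c) * Real.sqrt u) ^ 2 = (c ^ 2 + 1) * Real.cos φ ^ 2 / c ^ 2 := by
    field_simp [hsq]
    nlinarith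
  have hucos : u = Real.cos φ ^ 2 - c ^ 2 * Real.sin φ ^ 2 := by
    rw [hu_def]; nlinarith
  have hDval : 1 / (1 + (1 / c * Real.sqrt u) ^ 2) *
      (1 / c * (1 / (2 * Real.sqrt u) * -((c ^ 2 + 1) * (2 * Real.sin φ * Real.cos φ)))) =
      -(c * Real.sin φ) / (Real.sqrt u * Real.cos φ) := by
    rw [hden]
    have hc2 : (c:ℝ) ^ 2 + 1 ≠ 0 := by positivity
    field_simp
  rw [hDval, div_pow, mul_pow, hsq]
  rw [hucos]
  have h1 : Real.cos φ ^ 2 - c ^ 2 * Real.sin φ ^ 2 ≠ 0 := by rw [← hucos]; exact hu.ne'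
  field_simp [hsin.ne', hcos.ne', hc.ne']
end
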